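/- arXiv:2104.02451 — 3 statements merged into one kernel-verified Lean document; each statement's English description precedes it below -/
import Mathlib

section
/- Let N ≥ 3, Ω ⊂ ℝ^N a bounded open set with d(x) = dist(x, ∂Ω), let −1 < β ≤ 0, and let G : Ω × Ω → [0,∞) satisfy G(x,y) ≤ C min{1, d(x)d(y)/|x−y|^2} |x−y|^{2−N} for all x ≠ y in Ω. Then there exists a constant c = c(β, C, N, diam Ω) > 0 such that for every x ∈ Ω, ∫_{{y ∈ Ω : d(y) ≥ 2|x−y|}} G(x,y) d(y)^β dy ≤ c · d(x). -/
/-!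
On the region `2|x - y| ≤ d(y)` we have `|x - y| ≤ d(x)` and `d(y)^β ≤ (2|x - y|)^β`
(as `β ≤ 0`), while `G(x, y) ≤ C|x - y|^(2-N)`. The integral is therefore at most
`C 2^β ∫_{B(x, d(x))} |x - y|^(2-N+β) dy`, which polar coordinates evaluate to a multiple of
`d(x)^(2+β)`; since `1 + β > 0` and `d(x) ≤ diam Ω`, this is at most a constant times `d(x)`.
-/

open MeasureTheory Metric Set Module Bornology

section Indicator

variable {a r : ℝ}

theorem eqOn_pow_smul_indicator_Iic_rpow {n : ℕ} (hn : 1 ≤ n) :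
    EqOn (fun t : ℝ => t ^ (n - 1) • (Iic r).indicator (· ^ a) t)
      ((Ioc 0 r).indicator (· ^ ((n : ℝ) - 1 + a))) (Ioi 0) := by
  intro t (ht : 0 < t)
  by_cases htr : t ≤ r
  · simp [htr, ht, Real.rpow_add ht, ← Real.rpow_natCast, Nat.cast_sub hn]
  · simp [htr]

variable {E : Type*} [SeminormedAddCommGroup E]

theorem indicator_closedBall_norm_rpow :
    (closedBall (0 : E) r).indicator (‖·‖ ^ a) =
      fun y => (Iic r).indicator (· ^ a) ‖y‖ := by
  ext y; simp [indicator]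

theorem indicator_closedBall_dist_rpow (x : E) :
    (closedBall x r).indicator (dist x · ^ a) =
      fun y => (closedBall (0 : E) r).indicator (‖·‖ ^ a) (y - x) := by
  ext y; simp [indicator, dist_comm x, dist_eq_norm]

end Indicator

theorem dist_le_infDist_of_two_mul_dist_le {α : Type*} [PseudoMetricSpace α] {x y : α}
    {s : Set α} (h : 2 * dist x y ≤ infDist y s) : dist x y ≤ infDist x s := by
  have := infDist_le_infDist_add_dist (x := y) (y := x) (s := s)
  rw [dist_comm] at this
  linarith

theorem infDist_frontier_le_diam {α : Type*} [PseudoMetricSpace α] {Ω : Set α}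
    (hΩb : IsBounded Ω) (hfr : (frontier Ω).Nonempty) {x : α} (hx : x ∈ Ω) :
    infDist x (frontier Ω) ≤ diam Ω := by
  obtain ⟨z, hz⟩ := hfr
  calc infDist x (frontier Ω) ≤ dist x z := infDist_le_dist_of_mem hz
    _ ≤ diam (closure Ω) := dist_le_diam_of_mem hΩb.closure (subset_closure hx) hz.1
    _ = diam Ω := diam_closure Ω

theorem Bornology.IsBounded.frontier_nonempty {E : Type*} [NormedAddCommGroup E]
    [NormedSpace ℝ E] [Nontrivial E] {Ω : Set E} (hΩb : IsBounded Ω) (hne : Ω.Nonempty) :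
    (frontier Ω).Nonempty :=
  nonempty_frontier_iff.2 ⟨hne, fun h => NormedSpace.unbounded_univ ℝ E (h ▸ hΩb)⟩

theorem IsOpen.infDist_frontier_pos {α : Type*} [PseudoMetricSpace α] {Ω : Set α}
    (hΩo : IsOpen Ω) (hfr : (frontier Ω).Nonempty) {x : α} (hx : x ∈ Ω) :
    0 < infDist x (frontier Ω) :=
  (isClosed_frontier.notMem_iff_infDist_pos hfr).1 fun h => (hΩo.frontier_eq ▸ h).2 hx

theorem mul_rpow_le_of_le_mul_rpow {C g t δ p β : ℝ} (hC : 0 ≤ C) (ht : 0 < t)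
    (hβ : β ≤ 0) (hg : g ≤ C * t ^ p) (hδ : 2 * t ≤ δ) :
    g * δ ^ β ≤ C * 2 ^ β * t ^ (p + β) :=
  calc g * δ ^ β ≤ C * t ^ p * (2 * t) ^ β :=
        mul_le_mul hg (Real.rpow_le_rpow_of_nonpos (by positivity) hδ hβ)
          (Real.rpow_nonneg (by linarith) _) (by positivity)
    _ = C * 2 ^ β * t ^ (p + β) := by
        rw [Real.mul_rpow zero_le_two ht.le, Real.rpow_add ht]; ring

theorem rpow_add_one_le_rpow_mul {d D p : ℝ} (hd : 0 < d) (hdD : d ≤ D) (hp : 0 ≤ p) :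
    d ^ (p + 1) ≤ D ^ p * d := by
  rw [Real.rpow_add_one hd.ne']
  gcongr

section HaarMeasure

variable {E : Type*} [NormedAddCommGroup E] [NormedSpace ℝ E] [FiniteDimensional ℝ E]
  [Nontrivial E] [MeasurableSpace E] [BorelSpace E] (μ : Measure E) [μ.IsAddHaarMeasure]
  {a r : ℝ}

theorem integrable_indicator_closedBall_norm_rpow (ha : -(finrank ℝ E : ℝ) < a) :
    Integrable ((closedBall (0 : E) r).indicator (‖·‖ ^ a)) μ := by
  rw [indicator_closedBall_norm_rpow, integrable_fun_norm_addHaar,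
    integrableOn_congr_fun (eqOn_pow_smul_indicator_Iic_rpow finrank_pos) measurableSet_Ioi]
  refine (integrable_indicator_iff measurableSet_Ioc).2 ?_ |>.integrableOn
  exact (intervalIntegral.intervalIntegrable_rpow' (by linarith)).1

theorem integral_indicator_closedBall_norm_rpow (ha : -(finrank ℝ E : ℝ) < a)
    (hr : 0 ≤ r) :
    ∫ y, (closedBall (0 : E) r).indicator (‖·‖ ^ a) y ∂μ =
      finrank ℝ E * μ.real (ball 0 1) / (finrank ℝ E + a) * r ^ (finrank ℝ E + a) := by
  have hpos : 0 < (finrank ℝ E : ℝ) + a := by linarith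
  rw [indicator_closedBall_norm_rpow, integral_fun_norm_addHaar,
    setIntegral_congr_fun measurableSet_Ioi (eqOn_pow_smul_indicator_Iic_rpow finrank_pos),
    integral_indicator measurableSet_Ioc, Measure.restrict_restrict measurableSet_Ioc,
    inter_eq_left.2 Ioc_subset_Ioi_self, ← intervalIntegral.integral_of_le hr,
    integral_rpow (Or.inl (by linarith)),
    show (finrank ℝ E : ℝ) - 1 + a + 1 = finrank ℝ E + a by ring,
    Real.zero_rpow hpos.ne', sub_zero, nsmul_eq_mul, smul_eq_mul]
  field_simp

theorem integrableOn_closedBall_dist_rpow (ha : -(finrank ℝ E : ℝ) < a) (x : E) :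
    IntegrableOn (dist x · ^ a) (closedBall x r) μ := by
  rw [← integrable_indicator_iff measurableSet_closedBall, indicator_closedBall_dist_rpow]
  exact (integrable_indicator_closedBall_norm_rpow μ ha).comp_sub_right x

theorem integral_closedBall_dist_rpow (ha : -(finrank ℝ E : ℝ) < a) (hr : 0 ≤ r) (x : E) :
    ∫ y in closedBall x r, dist x y ^ a ∂μ =
      finrank ℝ E * μ.real (ball 0 1) / (finrank ℝ E + a) * r ^ (finrank ℝ E + a) := by
  rw [← integral_indicator measurableSet_closedBall, indicator_closedBall_dist_rpow,
    integral_sub_right_eq_self, integral_indicator_closedBall_norm_rpow μ ha hr]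

theorem setIntegral_mul_infDist_rpow_le {Ω s : Set E} {g : E → ℝ} {x : E} {C p β : ℝ}
    (hΩ : MeasurableSet Ω) (hC : 0 ≤ C) (hβ : β ≤ 0) (hpβ : -(finrank ℝ E : ℝ) < p + β)
    (hg₀ : ∀ y, 0 ≤ g y) (hg : ∀ y ∈ Ω, y ≠ x → g y ≤ C * dist x y ^ p) :
    ∫ y in {y ∈ Ω | 2 * dist x y ≤ infDist y s}, g y * infDist y s ^ β ∂μ ≤
      C * 2 ^ β * (finrank ℝ E * μ.real (ball 0 1) / (finrank ℝ E + (p + β))) *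
        infDist x s ^ (finrank ℝ E + (p + β)) := by
  set S := {y ∈ Ω | 2 * dist x y ≤ infDist y s}
  have hSm : MeasurableSet S :=
    hΩ.inter (measurableSet_le (by fun_prop) (continuous_infDist_pt _).measurable)
  have hS : S ⊆ closedBall x (infDist x s) := fun y hy =>
    mem_closedBall_comm.1 (dist_le_infDist_of_two_mul_dist_le hy.2)
  have hint :
      IntegrableOn (fun y => C * 2 ^ β * dist x y ^ (p + β)) (closedBall x (infDist x s)) μ :=
    (integrableOn_closedBall_dist_rpow μ hpβ x).const_mul _
  have hbound :
      ∀ᵐ y ∂μ.restrict S, g y * infDist y s ^ β ≤ C * 2 ^ β * dist x y ^ (p + β) := by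
    filter_upwards [ae_restrict_mem hSm, ae_restrict_of_ae (μ.ae_ne x)] with y hyS hyx
    exact mul_rpow_le_of_le_mul_rpow hC (dist_pos.2 hyx.symm) hβ (hg y hyS.1 hyx) hyS.2
  calc ∫ y in S, g y * infDist y s ^ β ∂μ
      ≤ ∫ y in S, C * 2 ^ β * dist x y ^ (p + β) ∂μ :=
        integral_mono_of_nonneg
          (.of_forall fun y => mul_nonneg (hg₀ y) (Real.rpow_nonneg infDist_nonneg _))
          (hint.mono_set hS) hbound
    _ ≤ ∫ y in closedBall x (infDist x s), C * 2 ^ β * dist x y ^ (p + β) ∂μ :=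
        setIntegral_mono_set hint (.of_forall fun y => by positivity) hS.eventuallyLE
    _ = _ := by
        rw [integral_const_mul, integral_closedBall_dist_rpow μ hpβ infDist_nonneg]
        ring

end HaarMeasure

theorem stmt6 {N : ℕ} (hN : 3 ≤ N) (Ω : Set (EuclideanSpace ℝ (Fin N)))
    (hΩo : IsOpen Ω) (hΩb : Bornology.IsBounded Ω)
    (β C : ℝ) (hβ : β ∈ Set.Ioc (-1 : ℝ) 0) (hC : 0 < C)
    (G : EuclideanSpace ℝ (Fin N) → EuclideanSpace ℝ (Fin N) → ℝ)
    (hGnn : ∀ x y, 0 ≤ G x y)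
    (hG : ∀ x ∈ Ω, ∀ y ∈ Ω, x ≠ y →
      G x y ≤ C * min 1 (Metric.infDist x (frontier Ω) * Metric.infDist y (frontier Ω)
        / dist x y ^ 2) * dist x y ^ (2 - (N : ℝ))) :
    ∃ c > 0, ∀ x ∈ Ω,
      ∫ y in {y ∈ Ω | 2 * dist x y ≤ Metric.infDist y (frontier Ω)},
          G x y * Metric.infDist y (frontier Ω) ^ β
        ≤ c * Metric.infDist x (frontier Ω) := by
  have : Nontrivial (EuclideanSpace ℝ (Fin N)) :=
    have : Nonempty (Fin N) := ⟨⟨0, by omega⟩⟩; inferInstance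
  set K := N * volume.real (ball (0 : EuclideanSpace ℝ (Fin N)) 1) / (1 + β + 1)
  have hK : 0 < K := by
    have : 0 < volume.real (ball (0 : EuclideanSpace ℝ (Fin N)) 1) :=
      ENNReal.toReal_pos (measure_ball_pos volume 0 one_pos).ne' measure_ball_lt_top.ne
    exact div_pos (by positivity) (by linarith [hβ.1])
  refine ⟨C * 2 ^ β * K * (diam Ω + 1) ^ (1 + β), by positivity, fun x hx => ?_⟩
  have hfr := hΩb.frontier_nonempty ⟨x, hx⟩
  have hGx : ∀ y ∈ Ω, y ≠ x → G x y ≤ C * dist x y ^ (2 - (N : ℝ)) := fun y hy hyx =>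
    (hG x hx y hy hyx.symm).trans (by grw [min_le_left]; simp)
  have hbound := setIntegral_mul_infDist_rpow_le volume (s := frontier Ω) hΩo.measurableSet hC.le
    hβ.2 (by rw [finrank_euclideanSpace_fin]; linarith [hβ.1]) (hGnn x) hGx
  rw [finrank_euclideanSpace_fin, show (N : ℝ) + (2 - N + β) = 1 + β + 1 by ring] at hbound
  refine hbound.trans ?_
  rw [mul_assoc _ _ (infDist x _)]
  gcongr
  exact rpow_add_one_le_rpow_mul (hΩo.infDist_frontier_pos hfr hx)
    (by linarith [infDist_frontier_le_diam hΩb hfr hx]) (by linarith [hβ.1])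
end

section
/- Let N ≥ 3, Ω ⊂ ℝ^N a bounded open set with d(x) = dist(x, ∂Ω), let −1 < β ≤ 0, and let G : Ω × Ω → [0,∞) satisfy G(x,y) ≤ C min{1, d(x)d(y)/|x−y|^2} |x−y|^{2−N}. Then there exists a constant c > 0 such that for every x ∈ Ω, ∫_{{y ∈ Ω : d(y) ≤ 2|x−y|}} G(x,y) d(y)^β dy ≤ c · d(x). -/
/-!
On the region `d(y) ≤ 2|x - y|` the second branch of the bound on `G` gives
`G(x,y) d(y)^β ≤ C d(x) d(y)^(1+β) |x - y|^(-N) ≤ 2 C d(x) |x - y|^(1+β-N)`.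
Since `1 + β - N > -N`, this singularity is integrable, and by translation invariance its integral
over the ball of radius `diam Ω + 1` around `x`, which contains `Ω`, does not depend on `x`.
-/

open MeasureTheory Metric Set Real

theorem preimage_sub_right_ball_zero {E : Type*} [SeminormedAddCommGroup E] (x : E) (R : ℝ) :
    (· - x) ⁻¹' ball 0 R = ball x R := by
  ext y
  simp [dist_eq_norm]

section PowerSingularity

variable {E : Type*} [NormedAddCommGroup E] [NormedSpace ℝ E] [FiniteDimensional ℝ E]
  [MeasurableSpace E] [BorelSpace E] {μ : Measure E} [μ.IsAddHaarMeasure]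

theorem integrableOn_norm_sub_rpow_ball (hd : 1 ≤ Module.finrank ℝ E) {p : ℝ}
    (hp : -(Module.finrank ℝ E : ℝ) < p) (x : E) (R : ℝ) :
    IntegrableOn (fun y ↦ ‖y - x‖ ^ p) (ball x R) μ := by
  have h0 : IntegrableOn (fun z : E ↦ ‖z‖ ^ p) (ball 0 R) μ :=
    integrableOn_ball_of_norm_le_rpow hd (α := -p) (C := 1) (by linarith)
      (ae_of_all _ fun z ↦ by simp [abs_of_nonneg (by positivity : 0 ≤ ‖z‖ ^ p)])
      (measurable_norm.pow_const p).aestronglyMeasurable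
  rw [← preimage_sub_right_ball_zero]
  exact ((measurePreserving_sub_right μ x).integrableOn_comp_preimage
    (measurableEmbedding_subRight x)).2 h0

theorem setIntegral_norm_sub_rpow_le (hd : 1 ≤ Module.finrank ℝ E) {p : ℝ}
    (hp : -(Module.finrank ℝ E : ℝ) < p) {s : Set E} {x : E} {R : ℝ}
    (hs : s ⊆ ball x R) :
    ∫ y in s, ‖y - x‖ ^ p ∂μ ≤ ∫ z in ball 0 R, ‖z‖ ^ p ∂μ := by
  calc ∫ y in s, ‖y - x‖ ^ p ∂μ ≤ ∫ y in ball x R, ‖y - x‖ ^ p ∂μ :=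
        setIntegral_mono_set (integrableOn_norm_sub_rpow_ball hd hp x R)
          (ae_of_all _ fun y ↦ by positivity) hs.eventuallyLE
    _ = ∫ z in ball 0 R, ‖z‖ ^ p ∂μ := by
        rw [← preimage_sub_right_ball_zero]
        exact (measurePreserving_sub_right μ x).setIntegral_preimage_emb
          (measurableEmbedding_subRight x) (fun z ↦ ‖z‖ ^ p) _

theorem setIntegral_le_of_le_norm_sub_rpow (hd : 1 ≤ Module.finrank ℝ E) {p : ℝ}
    (hp : -(Module.finrank ℝ E : ℝ) < p) {f : E → ℝ} {s : Set E} {x : E} {R K : ℝ}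
    (hs : MeasurableSet s) (hsR : s ⊆ ball x R) (hK : 0 ≤ K) (hf : ∀ y, 0 ≤ f y)
    (hfK : ∀ y ∈ s, y ≠ x → f y ≤ K * ‖y - x‖ ^ p) :
    ∫ y in s, f y ∂μ ≤ K * ∫ z in ball 0 R, ‖z‖ ^ p ∂μ := by
  have : Nontrivial E := Module.nontrivial_of_finrank_pos (R := ℝ) hd
  have hae : ∀ᵐ y ∂μ.restrict s, f y ≤ K * ‖y - x‖ ^ p := by
    filter_upwards [ae_restrict_mem hs,
      ae_restrict_of_ae (compl_mem_ae_iff.2 (measure_singleton x))] with y hys hyx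
    exact hfK y hys hyx
  calc ∫ y in s, f y ∂μ ≤ ∫ y in s, K * ‖y - x‖ ^ p ∂μ :=
        integral_mono_of_nonneg (ae_of_all _ hf)
          (((integrableOn_norm_sub_rpow_ball hd hp x R).mono_set hsR).const_mul K) hae
    _ = K * ∫ y in s, ‖y - x‖ ^ p ∂μ := integral_const_mul _ _
    _ ≤ K * ∫ z in ball 0 R, ‖z‖ ^ p ∂μ := by
        gcongr
        exact setIntegral_norm_sub_rpow_le hd hp hsR

end PowerSingularity

theorem mul_rpow_le_two_mul_rpow_add_one {a r β : ℝ} (ha : 0 ≤ a) (har : a ≤ 2 * r)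
    (hβ : β ∈ Ioc (-1 : ℝ) 0) : a * a ^ β ≤ 2 * r ^ (1 + β) := by
  have hr : 0 ≤ r := by linarith
  rcases ha.eq_or_lt with rfl | ha
  · rw [zero_mul]
    positivity
  calc a * a ^ β = a ^ (1 + β) := by rw [rpow_add ha, rpow_one]
    _ ≤ (2 * r) ^ (1 + β) := rpow_le_rpow ha.le har (by linarith [hβ.1])
    _ = 2 ^ (1 + β) * r ^ (1 + β) := mul_rpow zero_le_two hr
    _ ≤ 2 ^ (1 : ℝ) * r ^ (1 + β) := by
        gcongr
        · norm_num
        · linarith [hβ.2]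
    _ = 2 * r ^ (1 + β) := by rw [rpow_one]

theorem mul_rpow_le_of_le_min_mul_rpow {g C a b r β n : ℝ} (hC : 0 ≤ C) (ha : 0 ≤ a)
    (hb : 0 ≤ b) (hbr : b ≤ 2 * r) (hr : 0 < r) (hβ : β ∈ Ioc (-1 : ℝ) 0)
    (hg : g ≤ C * min 1 (a * b / r ^ 2) * r ^ (2 - n)) :
    g * b ^ β ≤ 2 * C * a * r ^ (1 + β - n) := by
  have hpow : r ^ (1 + β) * r ^ (2 - n) / r ^ 2 = r ^ (1 + β - n) := by
    rw [← rpow_add hr, ← rpow_natCast, ← rpow_sub hr]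
    ring_nf
  calc g * b ^ β ≤ C * (a * b / r ^ 2) * r ^ (2 - n) * b ^ β := by
        gcongr
        exact hg.trans (by gcongr; exact min_le_right _ _)
    _ = C * a * (b * b ^ β) * (r ^ (2 - n) / r ^ 2) := by ring
    _ ≤ C * a * (2 * r ^ (1 + β)) * (r ^ (2 - n) / r ^ 2) := by
        gcongr C * a * ?_ * _
        exact mul_rpow_le_two_mul_rpow_add_one hb hbr hβ
    _ = 2 * C * a * r ^ (1 + β - n) := by rw [← hpow]; ring

theorem stmt7 {N : ℕ} (hN : 3 ≤ N) (Ω : Set (EuclideanSpace ℝ (Fin N)))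
    (hΩo : IsOpen Ω) (hΩb : Bornology.IsBounded Ω)
    (β C : ℝ) (hβ : β ∈ Set.Ioc (-1 : ℝ) 0) (hC : 0 < C)
    (G : EuclideanSpace ℝ (Fin N) → EuclideanSpace ℝ (Fin N) → ℝ)
    (hGnn : ∀ x y, 0 ≤ G x y)
    (hG : ∀ x ∈ Ω, ∀ y ∈ Ω, x ≠ y →
      G x y ≤ C * min 1 (Metric.infDist x (frontier Ω) * Metric.infDist y (frontier Ω)
        / dist x y ^ 2) * dist x y ^ (2 - (N : ℝ))) :
    ∃ c > 0, ∀ x ∈ Ω,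
      ∫ y in {y ∈ Ω | Metric.infDist y (frontier Ω) ≤ 2 * dist x y},
          G x y * Metric.infDist y (frontier Ω) ^ β
        ≤ c * Metric.infDist x (frontier Ω) := by
  have hd : 1 ≤ Module.finrank ℝ (EuclideanSpace ℝ (Fin N)) := by
    rw [finrank_euclideanSpace_fin]; omega
  have hp : -(Module.finrank ℝ (EuclideanSpace ℝ (Fin N)) : ℝ) < 1 + β - N := by
    rw [finrank_euclideanSpace_fin]; linarith [hβ.1]
  set κ := ∫ z in ball (0 : EuclideanSpace ℝ (Fin N)) (diam Ω + 1), ‖z‖ ^ (1 + β - N)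
  have hκ : 0 ≤ κ := setIntegral_nonneg measurableSet_ball fun z _ ↦ by positivity
  refine ⟨2 * C * κ + 1, by positivity, fun x hx ↦ ?_⟩
  have hS : MeasurableSet {y ∈ Ω | infDist y (frontier Ω) ≤ 2 * dist x y} :=
    hΩo.measurableSet.inter <|
      measurableSet_le (continuous_infDist_pt _).measurable (by fun_prop)
  have hSR : {y ∈ Ω | infDist y (frontier Ω) ≤ 2 * dist x y} ⊆ ball x (diam Ω + 1) :=
    fun y hy ↦ by
      have := dist_le_diam_of_mem hΩb hy.1 hx
      rw [mem_ball]; linarith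
  have hdx : 0 ≤ infDist x (frontier Ω) := infDist_nonneg
  calc _ ≤ 2 * C * infDist x (frontier Ω) * κ := by
        refine setIntegral_le_of_le_norm_sub_rpow hd hp hS hSR (by positivity)
          (fun y ↦ mul_nonneg (hGnn x y) (rpow_nonneg infDist_nonneg _)) fun y hy hyx ↦ ?_
        rw [← dist_eq_norm, dist_comm]
        exact mul_rpow_le_of_le_min_mul_rpow hC.le hdx infDist_nonneg hy.2
          (dist_pos.2 hyx.symm) hβ (hG x hx y hy.1 hyx.symm)
    _ ≤ (2 * C * κ + 1) * infDist x (frontier Ω) := by nlinarith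
end

section
/- Let N ≥ 3, Ω ⊂ ℝ^N a bounded open set with d(x) = dist(x, ∂Ω), let β > −1, and let G : Ω × Ω → [0,∞) satisfy G(x,y) ≤ C min{1, d(x)d(y)/|x−y|^2} |x−y|^{2−N} for all x ≠ y. Define ψ(x) = ∫_Ω G(x,y) d(y)^β dy. Then there exists c > 0 depending only on β, C, N and diam(Ω) such that 0 ≤ ψ(x) ≤ c d(x) for every x ∈ Ω. -/
/-!
Write `d = dist(·, ∂Ω)`, `r = |x - y|` and `s = min 1 (1 + β) > 0`. The Green bound reads
`G(x,y) ≤ C min(r², d(x) d(y)) r^(-N)`, and since `|d(x) - d(y)| ≤ r` and `d(y) ≤ diam Ω`, one gets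
`min(r², d(x) d(y)) d(y)^β ≤ 3 (diam Ω)^(1+β-s) d(x) r^s`: near `x` (`2r ≤ d(x)`) use `r²` and
`r ≤ d(y) ≤ 2 d(x)`, far from `x` use `d(x) d(y)` and `d(y) ≤ 3r`. Hence
`G(x,y) d(y)^β ≲ d(x) r^(s-N)`, and `r^(s-N)` is integrable over the ball of radius `diam Ω + 1`
about `x`, with an integral that does not depend on `x` by translation invariance.
-/

open MeasureTheory Metric Set

section RadialIntegral

variable {E : Type*} [NormedAddCommGroup E] [MeasurableSpace E] [BorelSpace E]
  (μ : Measure E) [μ.IsAddLeftInvariant]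

lemma integrableOn_ball_dist_iff (g : ℝ → ℝ) (x : E) (r : ℝ) :
    IntegrableOn (fun y => g (dist x y)) (ball x r) μ ↔
      IntegrableOn (fun z => g ‖z‖) (ball 0 r) μ := by
  rw [← (measurePreserving_add_left μ x).integrableOn_comp_preimage
    (measurableEmbedding_addLeft x), preimage_add_left_ball, neg_add_cancel]
  simp [Function.comp_def]

lemma setIntegral_ball_dist (g : ℝ → ℝ) (x : E) (r : ℝ) :
    ∫ y in ball x r, g (dist x y) ∂μ = ∫ z in ball 0 r, g ‖z‖ ∂μ := by
  rw [← (measurePreserving_add_left μ x).setIntegral_preimage_emb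
    (measurableEmbedding_addLeft x), preimage_add_left_ball, neg_add_cancel]
  simp

end RadialIntegral

lemma integrableOn_ball_dist_rpow {E : Type*} [NormedAddCommGroup E] [NormedSpace ℝ E]
    [FiniteDimensional ℝ E] [Nontrivial E] [MeasurableSpace E] [BorelSpace E]
    (μ : Measure E) [μ.IsAddHaarMeasure] {t : ℝ} (ht : -(Module.finrank ℝ E : ℝ) < t)
    (x : E) (r : ℝ) :
    IntegrableOn (fun y => dist x y ^ t) (ball x r) μ := by
  refine (integrableOn_ball_dist_iff μ (· ^ t) x r).2 <|
    integrableOn_ball_of_norm_le_rpow (C := 1) (α := -t) Module.finrank_pos (by linarith)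
      (.of_forall fun z => ?_) (measurable_norm.pow_const t).aestronglyMeasurable
  simp [Real.abs_rpow_of_nonneg (norm_nonneg z)]

lemma min_sq_mul_mul_rpow_le {β s d e r D : ℝ} (hs0 : 0 ≤ s) (hs1 : s ≤ 1) (hsβ : s ≤ 1 + β)
    (hd : 0 ≤ d) (he : 0 ≤ e) (heD : e ≤ D) (hr : 0 ≤ r) (hde : |d - e| ≤ r) :
    min (r ^ 2) (d * e) * e ^ β ≤ 3 * D ^ (1 + β - s) * d * r ^ s := by
  have hD : 0 ≤ D := he.trans heD
  rcases he.eq_or_lt with rfl | he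
  · simp only [mul_zero, min_eq_right (sq_nonneg r), zero_mul]
    positivity
  have htail : e ^ (1 + β - s) ≤ D ^ (1 + β - s) := Real.rpow_le_rpow he.le heD (by linarith)
  obtain ⟨hdr, her⟩ := abs_sub_le_iff.1 hde
  rcases le_or_gt (2 * r) d with hnear | hfar
  · have hsplit : e ^ (2 - s) * e ^ β = e ^ (1 + β - s) * e := by
      rw [← Real.rpow_add he, ← Real.rpow_add_one he.ne']
      ring_nf
    calc min (r ^ 2) (d * e) * e ^ β ≤ r ^ s * r ^ (2 - s) * e ^ β := by
          rw [← Real.rpow_add' hr (by norm_num), add_sub_cancel, Real.rpow_two]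
          gcongr
          exact min_le_left _ _
      _ ≤ r ^ s * e ^ (2 - s) * e ^ β := by gcongr <;> linarith
      _ ≤ r ^ s * (D ^ (1 + β - s) * (2 * d)) := by
          rw [mul_assoc, hsplit]
          gcongr
          linarith
      _ ≤ 3 * D ^ (1 + β - s) * d * r ^ s := by
          nlinarith [mul_nonneg (mul_nonneg (Real.rpow_nonneg hD (1 + β - s)) hd)
            (Real.rpow_nonneg hr s)]
  · have hsplit : e * e ^ β = e ^ s * e ^ (1 + β - s) := by
      rw [← Real.rpow_add he, add_sub_cancel, Real.rpow_add he, Real.rpow_one]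
    have h3s : (3 : ℝ) ^ s ≤ 3 := by
      simpa using Real.rpow_le_rpow_of_exponent_le (by norm_num : (1 : ℝ) ≤ 3) hs1
    calc min (r ^ 2) (d * e) * e ^ β ≤ d * (e ^ s * e ^ (1 + β - s)) := by
          rw [← hsplit, ← mul_assoc]
          gcongr
          exact min_le_right _ _
      _ ≤ d * ((3 * r) ^ s * D ^ (1 + β - s)) := by gcongr; linarith
      _ ≤ 3 * D ^ (1 + β - s) * d * r ^ s := by
          rw [Real.mul_rpow (by norm_num) hr]
          nlinarith [mul_nonneg (mul_nonneg (Real.rpow_nonneg hD (1 + β - s)) hd)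
            (Real.rpow_nonneg hr s)]

lemma mul_rpow_le_of_le_green_bound {n β s C D d e r g : ℝ} (hC : 0 ≤ C) (hs0 : 0 ≤ s)
    (hs1 : s ≤ 1) (hsβ : s ≤ 1 + β) (hd : 0 ≤ d) (he : 0 ≤ e) (heD : e ≤ D) (hr : 0 < r)
    (hde : |d - e| ≤ r) (hg : g ≤ C * min 1 (d * e / r ^ 2) * r ^ (2 - n)) :
    g * e ^ β ≤ 3 * C * D ^ (1 + β - s) * d * r ^ (s - n) := by
  have hmin : C * min 1 (d * e / r ^ 2) * r ^ (2 - n) = C * min (r ^ 2) (d * e) * r ^ (-n) := by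
    rw [← div_self (pow_pos hr 2).ne', min_div_div_right (by positivity), sub_eq_add_neg,
      Real.rpow_add hr, Real.rpow_two]
    field_simp
  calc g * e ^ β ≤ C * (min (r ^ 2) (d * e) * e ^ β) * r ^ (-n) := by
        rw [hmin] at hg
        nlinarith [Real.rpow_nonneg he β]
    _ ≤ C * (3 * D ^ (1 + β - s) * d * r ^ s) * r ^ (-n) := by
        gcongr C * ?_ * _
        exact min_sq_mul_mul_rpow_le hs0 hs1 hsβ hd he heD hr.le hde
    _ = 3 * C * D ^ (1 + β - s) * d * r ^ (s - n) := by
        rw [sub_eq_add_neg s, Real.rpow_add hr]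
        ring

lemma infDist_frontier_le_diam_s8 {α : Type*} [PseudoMetricSpace α] {s : Set α} {y : α}
    (hs : Bornology.IsBounded s) (hy : y ∈ s) : infDist y (frontier s) ≤ diam s := by
  rcases (frontier s).eq_empty_or_nonempty with h | ⟨w, hw⟩
  · simp [h, diam_nonneg]
  · rw [← diam_closure]
    exact (infDist_le_dist_of_mem hw).trans
      (dist_le_diam_of_mem hs.closure (subset_closure hy) (frontier_subset_closure hw))

lemma setIntegral_mul_infDist_rpow_le_s8 {E : Type*} [NormedAddCommGroup E] [NormedSpace ℝ E]
    [FiniteDimensional ℝ E] [Nontrivial E] [MeasurableSpace E] [BorelSpace E]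
    (μ : Measure E) [μ.IsAddHaarMeasure] {Ω : Set E} (hΩm : MeasurableSet Ω)
    (hΩb : Bornology.IsBounded Ω) {β s C : ℝ} (hs0 : 0 < s) (hs1 : s ≤ 1) (hsβ : s ≤ 1 + β)
    (hC : 0 ≤ C) {g : E → ℝ} {x : E} (hx : x ∈ Ω) (hg0 : ∀ y ∈ Ω, 0 ≤ g y)
    (hg : ∀ y ∈ Ω, x ≠ y → g y ≤ C * min 1 (infDist x (frontier Ω) * infDist y (frontier Ω)
      / dist x y ^ 2) * dist x y ^ (2 - (Module.finrank ℝ E : ℝ))) :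
    ∫ y in Ω, g y * infDist y (frontier Ω) ^ β ∂μ ≤
      3 * C * diam Ω ^ (1 + β - s) *
        (∫ z in ball (0 : E) (diam Ω + 1), ‖z‖ ^ (s - Module.finrank ℝ E) ∂μ) *
        infDist x (frontier Ω) := by
  set n : ℝ := (Module.finrank ℝ E : ℝ)
  set K := 3 * C * diam Ω ^ (1 + β - s) * infDist x (frontier Ω)
  have hK : 0 ≤ K := by
    have := diam_nonneg (s := Ω)
    have := infDist_nonneg (x := x) (s := frontier Ω)
    positivity
  have hsub : Ω ⊆ ball x (diam Ω + 1) := fun y hy =>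
    mem_ball.2 ((dist_le_diam_of_mem hΩb hy hx).trans_lt (lt_add_one _))
  have hint : IntegrableOn (fun y => dist x y ^ (s - n)) (ball x (diam Ω + 1)) μ :=
    integrableOn_ball_dist_rpow μ (by linarith) x _
  have hpt : ∀ᵐ y ∂μ.restrict Ω, g y * infDist y (frontier Ω) ^ β ≤ K * dist x y ^ (s - n) := by
    filter_upwards [ae_restrict_mem hΩm,
      ae_restrict_of_ae (compl_mem_ae_iff.mpr (measure_singleton x))] with y hy hyx
    have hxy : x ≠ y := fun h => hyx h.symm
    have hLip : |infDist x (frontier Ω) - infDist y (frontier Ω)| ≤ dist x y := by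
      simpa [Real.dist_eq] using (lipschitz_infDist_pt (frontier Ω)).dist_le_mul x y
    have := mul_rpow_le_of_le_green_bound hC hs0.le hs1 hsβ infDist_nonneg infDist_nonneg
      (infDist_frontier_le_diam_s8 hΩb hy) (dist_pos.2 hxy) hLip (hg y hy hxy)
    linarith
  calc ∫ y in Ω, g y * infDist y (frontier Ω) ^ β ∂μ
      ≤ ∫ y in Ω, K * dist x y ^ (s - n) ∂μ :=
        integral_mono_of_nonneg (ae_restrict_of_forall_mem hΩm fun y hy =>
          mul_nonneg (hg0 y hy) (Real.rpow_nonneg infDist_nonneg β))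
          ((hint.mono_set hsub).const_mul K) hpt
    _ = K * ∫ y in Ω, dist x y ^ (s - n) ∂μ := integral_const_mul _ _
    _ ≤ K * ∫ y in ball x (diam Ω + 1), dist x y ^ (s - n) ∂μ :=
        mul_le_mul_of_nonneg_left (setIntegral_mono_set hint
          (.of_forall fun y => Real.rpow_nonneg dist_nonneg _) hsub.eventuallyLE) hK
    _ = _ := by
        rw [setIntegral_ball_dist μ (· ^ (s - n))]
        ring

theorem stmt8 {N : ℕ} (hN : 3 ≤ N) (Ω : Set (EuclideanSpace ℝ (Fin N)))
    (hΩo : IsOpen Ω) (hΩb : Bornology.IsBounded Ω)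
    (β C : ℝ) (hβ : -1 < β) (hC : 0 < C)
    (G : EuclideanSpace ℝ (Fin N) → EuclideanSpace ℝ (Fin N) → ℝ)
    (hGnn : ∀ x y, 0 ≤ G x y)
    (hG : ∀ x ∈ Ω, ∀ y ∈ Ω, x ≠ y →
      G x y ≤ C * min 1 (Metric.infDist x (frontier Ω) * Metric.infDist y (frontier Ω)
        / dist x y ^ 2) * dist x y ^ (2 - (N : ℝ)))
    (ψ : EuclideanSpace ℝ (Fin N) → ℝ)
    (hψ : ∀ x, ψ x = ∫ y in Ω, G x y * Metric.infDist y (frontier Ω) ^ β) :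
    ∃ c > 0, ∀ x ∈ Ω, 0 ≤ ψ x ∧ ψ x ≤ c * Metric.infDist x (frontier Ω) := by
  have : Nonempty (Fin N) := ⟨⟨0, by omega⟩⟩
  set s := min 1 (1 + β)
  set c := 3 * C * diam Ω ^ (1 + β - s) *
    ∫ z in ball (0 : EuclideanSpace ℝ (Fin N)) (diam Ω + 1), ‖z‖ ^ (s - N)
  refine ⟨max c 1, by positivity, fun x hx => ⟨?_, ?_⟩⟩
  · rw [hψ]
    exact setIntegral_nonneg hΩo.measurableSet fun y _ =>
      mul_nonneg (hGnn x y) (Real.rpow_nonneg infDist_nonneg β)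
  · calc ψ x ≤ c * infDist x (frontier Ω) := by
          rw [hψ]
          simpa [finrank_euclideanSpace_fin] using setIntegral_mul_infDist_rpow_le_s8 volume
            hΩo.measurableSet hΩb (lt_min one_pos (by linarith)) (min_le_left _ _)
            (min_le_right _ _) hC.le hx (fun y _ => hGnn x y)
            (by simpa [finrank_euclideanSpace_fin] using hG x hx)
      _ ≤ max c 1 * infDist x (frontier Ω) :=
          mul_le_mul_of_nonneg_right (le_max_left c 1) infDist_nonneg
end
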